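/- The q-coherent state is an eigenfunction of the annihilation operator: for every real ζ with q(1−q)ζ² < 1, the function g_ζ(x) = √(ω_α(x;q)) · E_{q,α}(q^{1/2}(1−q)^{1/2} x ζ) satisfies, for every real x ≠ 0, (q^{1/2}/(√(1−q)·x)) · [ √(1+q^{−2α−3}x²) g_ζ(q^{−1}x) − (g_ζ)_e(x) − q^{2α+1} (g_ζ)_o(x) ] = ζ · g_ζ(x), where (g_ζ)_e(x) = (g_ζ(x)+g_ζ(−x))/2 and (g_ζ)_o(x) = (g_ζ(x)−g_ζ(−x))/2, and E_{q,α}(z) = Σ_{k=0}^∞ q^{k(k−1)/2} z^k/(q;q)_{k,α}. -/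

import Mathlib

open scoped BigOperators
open Real Filter

noncomputable section

/-- q-shifted factorial `(a;q)_n`. -/
def qPoch (a q : ℝ) (n : ℕ) : ℝ := ∏ k ∈ Finset.range n, (1 - a * q ^ k)

/-- infinite q-shifted factorial `(a;q)_∞`. -/
def qPochInf (a q : ℝ) : ℝ := ∏' k : ℕ, (1 - a * q ^ k)

/-- q-number `⟦x⟧_q = (1-q^x)/(1-q)`. -/
def qNumber (q x : ℝ) : ℝ := (1 - q ^ x) / (1 - q)

/-- generalized q-integer `⟦n⟧_{q,α}`: equals `⟦n⟧_q` for even `n` and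
`⟦n+2α+1⟧_q` for odd `n` (so `⟦2m+1⟧_{q,α} = ⟦2m+2α+2⟧_q`). -/
def qNumAlpha (q α : ℝ) (n : ℕ) : ℝ :=
  if n % 2 = 0 then qNumber q n else qNumber q (n + 2 * α + 1)

/-- generalized q-factorial `n!_{q,α}`. -/
def qFactAlpha (q α : ℝ) (n : ℕ) : ℝ := ∏ k ∈ Finset.range n, qNumAlpha q α (k + 1)

/-- generalized q-shifted factorial `(q;q)_{n,α} = (1-q)^n n!_{q,α}`. -/
def qPochAlpha (q α : ℝ) (n : ℕ) : ℝ := (1 - q) ^ n * qFactAlpha q α n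

/-- generalized discrete q-Hermite II polynomials `h̃_{n,α}(x;q)`. -/
def hTilde (q α : ℝ) (n : ℕ) (x : ℝ) : ℝ :=
  qPoch q q n * ∑ k ∈ Finset.range (n / 2 + 1),
    (-1 : ℝ) ^ k * q ^ ((k * (2 * k + 1) : ℤ) - (2 * n * k : ℤ)) * x ^ (n - 2 * k) /
      (qPoch (q ^ 2) (q ^ 2) k * qPochAlpha q α (n - 2 * k))

/-- the weight `ω_α(x;q) = e_{q²}(-q^{-2α-1}x²) = 1/∏_{k≥0}(1+q^{-2α-1}x²q^{2k})`. -/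
def omegaAlpha (q α x : ℝ) : ℝ :=
  (∏' k : ℕ, (1 + q ^ (-(2 * α + 1)) * x ^ 2 * q ^ (2 * k)))⁻¹

/-- normalization constant `c_α`. -/
def cAlpha (q α : ℝ) : ℝ :=
  Real.sqrt (qPochInf (-q ^ (-(2 * α + 1))) (q ^ 2) * qPochInf (-q ^ (2 * α + 3)) (q ^ 2) *
      qPochInf (q ^ (2 * α + 2)) (q ^ 2) /
    (2 * (1 - q) *
      (qPochInf (-q) (q ^ 2) * qPochInf (-q) (q ^ 2) * qPochInf (q ^ 2) (q ^ 2))))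

/-- normalization constant `d_{n,α} = c_α q^{n²/2} (q;q)_{n,α}^{1/2} / (q;q)_n`. -/
def dAlpha (q α : ℝ) (n : ℕ) : ℝ :=
  cAlpha q α * q ^ (((n : ℝ) ^ 2) / 2) * Real.sqrt (qPochAlpha q α n) / qPoch q q n

/-- the (q,α)-deformed Hermite functions `φ_n^α(x;q)`. -/
def phiQ (q α : ℝ) (n : ℕ) (x : ℝ) : ℝ :=
  dAlpha q α n * Real.sqrt (omegaAlpha q α x) * hTilde q α n x

/-- parity indicator `θ(n)`: 1 if `n` is odd, 0 if `n` is even. -/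
def theta (n : ℕ) : ℝ := if n % 2 = 1 then 1 else 0

/-- the q-Gamma function `Γ_q(z) = (q;q)_∞ / (q^z;q)_∞ · (1-q)^{1-z}`. -/
def qGammaF (q z : ℝ) : ℝ := qPochInf q q / qPochInf (q ^ z) q * (1 - q) ^ (1 - z)

/-- Rosenblum generalized factorial `γ_ν(n)`. -/
def gammaGen (ν : ℝ) (n : ℕ) : ℝ :=
  2 ^ n * (Nat.factorial (n / 2) : ℝ) *
    Real.Gamma (ν + (((n + 1) / 2 : ℕ) : ℝ) + 1 / 2) / Real.Gamma (ν + 1 / 2)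

/-- generalized Hermite polynomials `H_n^ν(x)`. -/
def HGen (ν : ℝ) (n : ℕ) (x : ℝ) : ℝ :=
  (Nat.factorial n : ℝ) * ∑ k ∈ Finset.range (n / 2 + 1),
    (-1 : ℝ) ^ k * (2 * x) ^ (n - 2 * k) / ((Nat.factorial k : ℝ) * gammaGen ν (n - 2 * k))

/-- Rosenblum generalized Hermite functions `φ_n^ν(x)`. -/
def phiGen (ν : ℝ) (n : ℕ) (x : ℝ) : ℝ :=
  Real.sqrt (gammaGen ν n / Real.Gamma (ν + 1 / 2)) * Real.exp (-x ^ 2 / 2) *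
    HGen ν n x / ((2 : ℝ) ^ ((n : ℝ) / 2) * (Nat.factorial n : ℝ))

/-- symmetric q-number `[x]_s = (s^x - s^{-x})/(s - s^{-1})`. -/
def qNumSym (s x : ℝ) : ℝ := (s ^ x - s ^ (-x)) / (s - s⁻¹)

/-- Euler q-exponential `e_q(z) = Σ z^k/(q;q)_k`. -/
def eExp (q z : ℝ) : ℝ := ∑' k : ℕ, z ^ k / qPoch q q k

/-- generalized q-exponential `E_{q,α}(z) = Σ q^{k(k-1)/2} z^k/(q;q)_{k,α}`. -/
def bigEAlpha (q α z : ℝ) : ℝ := ∑' k : ℕ, q ^ (k * (k - 1) / 2) * z ^ k / qPochAlpha q α k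

/-- generalized q-exponential `e_{q,α}(z) = Σ z^k/(q;q)_{k,α}`. -/
def eExpAlpha (q α z : ℝ) : ℝ := ∑' k : ℕ, z ^ k / qPochAlpha q α k

/-- the (unnormalized) q-coherent state `g_ζ(x) = √(ω_α(x;q)) E_{q,α}(q^{1/2}(1-q)^{1/2}xζ)`. -/
def gCoh (q α ζ x : ℝ) : ℝ :=
  Real.sqrt (omegaAlpha q α x) * bigEAlpha q α (Real.sqrt q * Real.sqrt (1 - q) * x * ζ)

/-!
Coefficientwise, `z ↦ E(z/q) - E_e(z) - q^{2α+1} E_o(z)` multiplies the `k`-th coefficient of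
`E_{q,α}` by `q^{-k} (1 - q^k μ_k) = q^{-k} (1 - q) ⟦k⟧_{q,α}` (with `μ_k = 1` or `q^{2α+1}`
according to the parity of `k`). This cancels the last factor of `(q;q)_{k,α}` and shifts the
series, giving `z/q · E_{q,α}(z)`. On the weight side, peeling off the first factor of the
infinite product gives `ω_α(x/q) = ω_α(x) / (1 + q^{-2α-3} x²)`, which absorbs the square root in
front of `g_ζ(x/q)`, and `ω_α` is even.
-/

open Topology

def parityWeight (c : ℝ) (n : ℕ) : ℝ := if n % 2 = 0 then 1 else c

lemma parityWeight_nonneg {c : ℝ} (hc : 0 ≤ c) (n : ℕ) : 0 ≤ parityWeight c n := by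
  unfold parityWeight; split <;> positivity

lemma parityWeight_le_max (c : ℝ) (n : ℕ) : parityWeight c n ≤ max 1 c := by
  unfold parityWeight; split
  · exact le_max_left _ _
  · exact le_max_right _ _

lemma even_part_add_mul_odd_part_pow (c z : ℝ) (n : ℕ) :
    (z ^ n + (-z) ^ n) / 2 + c * ((z ^ n - (-z) ^ n) / 2) = parityWeight c n * z ^ n := by
  unfold parityWeight
  split
  · rename_i h
    rw [(Nat.even_iff.mpr h).neg_pow]; ring
  · rename_i h
    rw [(Nat.odd_iff.mpr (Nat.mod_two_ne_zero.mp h)).neg_pow]; ring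

lemma one_sub_mul_qNumAlpha {q : ℝ} (α : ℝ) (hq0 : 0 < q) (hq1 : q ≠ 1) (n : ℕ) :
    (1 - q) * qNumAlpha q α n = 1 - q ^ n * parityWeight (q ^ (2 * α + 1)) n := by
  have h1q : (1 : ℝ) - q ≠ 0 := sub_ne_zero.mpr hq1.symm
  unfold qNumAlpha qNumber parityWeight
  split
  · rw [mul_div_cancel₀ _ h1q, Real.rpow_natCast, mul_one]
  · rw [mul_div_cancel₀ _ h1q, add_assoc, Real.rpow_add hq0, Real.rpow_natCast]

lemma qPochAlpha_succ (q α : ℝ) (n : ℕ) :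
    qPochAlpha q α (n + 1) = qPochAlpha q α n * ((1 - q) * qNumAlpha q α (n + 1)) := by
  unfold qPochAlpha qFactAlpha
  rw [Finset.prod_range_succ, pow_succ]
  ring

lemma qNumber_pos {q x : ℝ} (hq0 : 0 < q) (hq1 : q < 1) (hx : 0 < x) : 0 < qNumber q x :=
  div_pos (sub_pos.mpr (Real.rpow_lt_one hq0.le hq1 hx)) (sub_pos.mpr hq1)

lemma qNumAlpha_succ_pos {q α : ℝ} (hq0 : 0 < q) (hq1 : q < 1) (hα : -1 < α) (n : ℕ) :
    0 < qNumAlpha q α (n + 1) := by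
  unfold qNumAlpha
  split
  · exact qNumber_pos hq0 hq1 (by positivity)
  · exact qNumber_pos hq0 hq1 (by push_cast; linarith [(n.cast_nonneg : (0 : ℝ) ≤ n)])

lemma qPochAlpha_pos {q α : ℝ} (hq0 : 0 < q) (hq1 : q < 1) (hα : -1 < α) (n : ℕ) :
    0 < qPochAlpha q α n := by
  induction n with
  | zero => simp [qPochAlpha, qFactAlpha]
  | succ n ih =>
    rw [qPochAlpha_succ]
    exact mul_pos ih (mul_pos (sub_pos.mpr hq1) (qNumAlpha_succ_pos hq0 hq1 hα n))

lemma tendsto_one_sub_mul_qNumAlpha {q : ℝ} (α : ℝ) (hq0 : 0 < q) (hq1 : q < 1) :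
    Tendsto (fun n : ℕ => (1 - q) * qNumAlpha q α n) atTop (𝓝 1) := by
  set c := q ^ (2 * α + 1)
  have hc : 0 ≤ c := by positivity
  have hpow : Tendsto (fun n : ℕ => q ^ n * max 1 c) atTop (𝓝 0) := by
    simpa using (tendsto_pow_atTop_nhds_zero_of_lt_one hq0.le hq1).mul_const (max 1 c)
  have hsmall : Tendsto (fun n : ℕ => q ^ n * parityWeight c n) atTop (𝓝 0) :=
    squeeze_zero (fun n => mul_nonneg (by positivity) (parityWeight_nonneg hc n))
      (fun n => mul_le_mul_of_nonneg_left (parityWeight_le_max c n) (by positivity)) hpow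
  simp_rw [one_sub_mul_qNumAlpha α hq0 hq1.ne]
  simpa using hsmall.const_sub 1

lemma summable_of_succ_eq_mul_of_tendsto_zero {f r : ℕ → ℝ} (hf : ∀ n, f (n + 1) = f n * r n)
    (hr : Tendsto r atTop (𝓝 0)) : Summable f := by
  refine summable_of_ratio_norm_eventually_le (r := 1 / 2) (by norm_num) ?_
  have hsmall := (tendsto_norm_zero.comp hr).eventually
    (eventually_le_nhds (by norm_num : (0 : ℝ) < 1 / 2))
  filter_upwards [hsmall] with n hn
  rw [hf, norm_mul, mul_comm]
  exact mul_le_mul_of_nonneg_right hn (norm_nonneg _)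

def bigEAlphaTerm (q α z : ℝ) (k : ℕ) : ℝ := q ^ (k * (k - 1) / 2) * z ^ k / qPochAlpha q α k

lemma bigEAlphaTerm_succ (q α z : ℝ) (n : ℕ) :
    bigEAlphaTerm q α z (n + 1) =
      bigEAlphaTerm q α z n * (q ^ n * z / ((1 - q) * qNumAlpha q α (n + 1))) := by
  unfold bigEAlphaTerm
  rw [qPochAlpha_succ, Nat.triangle_succ, pow_add, pow_succ, div_mul_div_comm]
  ring

lemma summable_bigEAlphaTerm {q : ℝ} (α : ℝ) (hq0 : 0 < q) (hq1 : q < 1) (z : ℝ) :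
    Summable (bigEAlphaTerm q α z) := by
  refine summable_of_succ_eq_mul_of_tendsto_zero (bigEAlphaTerm_succ q α z) ?_
  have hnum : Tendsto (fun n : ℕ => q ^ n * z) atTop (𝓝 0) := by
    simpa using (tendsto_pow_atTop_nhds_zero_of_lt_one hq0.le hq1).mul_const z
  have hden : Tendsto (fun n : ℕ => (1 - q) * qNumAlpha q α (n + 1)) atTop (𝓝 1) :=
    (tendsto_one_sub_mul_qNumAlpha α hq0 hq1).comp (tendsto_add_atTop_nat 1)
  have hratio := hnum.div hden one_ne_zero
  rw [zero_div] at hratio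
  exact hratio

lemma hasSum_bigEAlpha {q : ℝ} (α : ℝ) (hq0 : 0 < q) (hq1 : q < 1) (z : ℝ) :
    HasSum (bigEAlphaTerm q α z) (bigEAlpha q α z) :=
  (summable_bigEAlphaTerm α hq0 hq1 z).hasSum

lemma bigEAlphaTerm_div_sub_even_sub_odd {q α : ℝ} (hq0 : 0 < q) (hq1 : q < 1) (hα : -1 < α)
    (z : ℝ) (k : ℕ) :
    bigEAlphaTerm q α (z / q) k - (bigEAlphaTerm q α z k + bigEAlphaTerm q α (-z) k) / 2 -
        q ^ (2 * α + 1) * ((bigEAlphaTerm q α z k - bigEAlphaTerm q α (-z) k) / 2) =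
      if k = 0 then 0 else z / q * bigEAlphaTerm q α z (k - 1) := by
  have hparity := even_part_add_mul_odd_part_pow (q ^ (2 * α + 1)) z k
  have hsplit : bigEAlphaTerm q α (z / q) k -
      (bigEAlphaTerm q α z k + bigEAlphaTerm q α (-z) k) / 2 -
        q ^ (2 * α + 1) * ((bigEAlphaTerm q α z k - bigEAlphaTerm q α (-z) k) / 2) =
      q ^ (k * (k - 1) / 2) / qPochAlpha q α k *
        ((z / q) ^ k - parityWeight (q ^ (2 * α + 1)) k * z ^ k) := by
    rw [← hparity]; unfold bigEAlphaTerm; ring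
  rw [hsplit]
  rcases k with _ | n
  · simp [parityWeight]
  · have hD := (mul_pos (sub_pos.mpr hq1) (qNumAlpha_succ_pos hq0 hq1 hα n)).ne'
    rw [one_sub_mul_qNumAlpha α hq0 hq1.ne] at hD
    simp only [Nat.add_one_ne_zero, if_false, Nat.add_sub_cancel, bigEAlphaTerm]
    rw [qPochAlpha_succ, one_sub_mul_qNumAlpha α hq0 hq1.ne,
      show (n + 1) * n / 2 = n * (n - 1) / 2 + n from Nat.triangle_succ n, pow_add, div_pow]
    have hq := hq0.ne'
    have hP := (qPochAlpha_pos hq0 hq1 hα n).ne'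
    field_simp
    ring

lemma bigEAlpha_div_sub_even_sub_odd {q α : ℝ} (hq0 : 0 < q) (hq1 : q < 1) (hα : -1 < α)
    (z : ℝ) :
    bigEAlpha q α (z / q) - (bigEAlpha q α z + bigEAlpha q α (-z)) / 2 -
        q ^ (2 * α + 1) * ((bigEAlpha q α z - bigEAlpha q α (-z)) / 2) =
      z / q * bigEAlpha q α z := by
  have hS := hasSum_bigEAlpha α hq0 hq1
  have hlhs := ((hS (z / q)).sub (((hS z).add (hS (-z))).div_const 2)).sub
    ((((hS z).sub (hS (-z))).div_const 2).mul_left (q ^ (2 * α + 1)))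
  simp only [bigEAlphaTerm_div_sub_even_sub_odd hq0 hq1 hα] at hlhs
  have hrhs : HasSum (fun k : ℕ => if k = 0 then 0 else z / q * bigEAlphaTerm q α z (k - 1))
      (z / q * bigEAlpha q α z) := by
    rw [← hasSum_nat_add_iff' 1]
    simpa using (hS z).mul_left (z / q)
  exact hlhs.unique hrhs

lemma omegaAlpha_neg (q α x : ℝ) : omegaAlpha q α (-x) = omegaAlpha q α x := by
  simp only [omegaAlpha, neg_sq]

lemma omegaAlpha_div {q : ℝ} (α : ℝ) (hq0 : 0 < q) (hq1 : q < 1) (x : ℝ) :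
    omegaAlpha q α (x / q) = (1 + q ^ (-(2 * α + 3)) * x ^ 2)⁻¹ * omegaAlpha q α x := by
  have hexp : q ^ (-(2 * α + 1)) = q ^ (-(2 * α + 3)) * q ^ 2 := by
    rw [← Real.rpow_natCast, ← Real.rpow_add hq0]; norm_num; ring_nf
  have hshift (k : ℕ) : 1 + q ^ (-(2 * α + 1)) * (x / q) ^ 2 * q ^ (2 * (k + 1)) =
      1 + q ^ (-(2 * α + 1)) * x ^ 2 * q ^ (2 * k) := by
    rw [mul_add, pow_add]; field_simp; ring
  have hmult : Multipliable fun k : ℕ => 1 + q ^ (-(2 * α + 1)) * x ^ 2 * q ^ (2 * k) := by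
    refine Real.multipliable_one_add_of_summable ?_
    simp_rw [pow_mul]
    exact (summable_geometric_of_lt_one (by positivity) (by nlinarith)).mul_left _
  unfold omegaAlpha
  rw [tprod_eq_zero_mul' (by simpa only [hshift] using hmult), tprod_congr hshift, mul_inv]
  congr 2
  rw [hexp]; field_simp; ring

lemma sqrt_mul_sqrt_omegaAlpha_div {q : ℝ} (α : ℝ) (hq0 : 0 < q) (hq1 : q < 1) (x : ℝ) :
    √(1 + q ^ (-(2 * α + 3)) * x ^ 2) * √(omegaAlpha q α (x / q)) = √(omegaAlpha q α x) := by
  have hpos : 0 < 1 + q ^ (-(2 * α + 3)) * x ^ 2 := by positivity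
  rw [omegaAlpha_div α hq0 hq1, ← Real.sqrt_mul hpos.le, ← mul_assoc, mul_inv_cancel₀ hpos.ne',
    one_mul]

theorem stmt_13_general (q α : ℝ) (hq0 : 0 < q) (hq1 : q < 1) (hα : -1 < α)
    (ζ : ℝ) (x : ℝ) (hx : x ≠ 0) :
    Real.sqrt q / (Real.sqrt (1 - q) * x) *
      (Real.sqrt (1 + q ^ (-(2 * α + 3)) * x ^ 2) * gCoh q α ζ (x / q) -
        (gCoh q α ζ x + gCoh q α ζ (-x)) / 2 -
        q ^ (2 * α + 1) * ((gCoh q α ζ x - gCoh q α ζ (-x)) / 2)) =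
    ζ * gCoh q α ζ x := by
  simp only [gCoh, omegaAlpha_neg, mul_neg, neg_mul,
    show √q * √(1 - q) * (x / q) * ζ = √q * √(1 - q) * x * ζ / q by ring]
  set z := √q * √(1 - q) * x * ζ with hz
  have hscale : √q / (√(1 - q) * x) * (z / q) = ζ := by
    have h1q : √(1 - q) ≠ 0 := (Real.sqrt_pos.mpr (sub_pos.mpr hq1)).ne'
    rw [hz, show √q / (√(1 - q) * x) * (√q * √(1 - q) * x * ζ / q) =
      √q * √q / q * ((√(1 - q) * x) / (√(1 - q) * x)) * ζ by ring,
      Real.mul_self_sqrt hq0.le, div_self hq0.ne', div_self (mul_ne_zero h1q hx), one_mul, one_mul]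
  have hE := bigEAlpha_div_sub_even_sub_odd hq0 hq1 hα z
  have hω := sqrt_mul_sqrt_omegaAlpha_div α hq0 hq1 x
  calc _ = √q / (√(1 - q) * x) * (√(omegaAlpha q α x) * (z / q * bigEAlpha q α z)) := by
        rw [← hE, ← hω]; ring
    _ = _ := by rw [← hscale]; ring

/-- the q-coherent state is an eigenfunction of the annihilation operator. -/
theorem stmt_13 (q α : ℝ) (hq0 : 0 < q) (hq1 : q < 1) (hα : -1 < α)
    (ζ : ℝ) (hζ : q * (1 - q) * ζ ^ 2 < 1) (x : ℝ) (hx : x ≠ 0) :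
    Real.sqrt q / (Real.sqrt (1 - q) * x) *
      (Real.sqrt (1 + q ^ (-(2 * α + 3)) * x ^ 2) * gCoh q α ζ (x / q) -
        (gCoh q α ζ x + gCoh q α ζ (-x)) / 2 -
        q ^ (2 * α + 1) * ((gCoh q α ζ x - gCoh q α ζ (-x)) / 2)) =
    ζ * gCoh q α ζ x :=
  stmt_13_general q α hq0 hq1 hα ζ x hx
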